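/- Every continuous homomorphism φ from K to the circle group {z ∈ ℂ : |z| = 1} is a Vilenkin character: there exists a unique finitely supported a : ℕ → ℤ/pℤ such that φ(x) = exp(2πi·v(a,x)/p) for all x ∈ K. -/
import Mathlib

/-- The Vilenkin character `w_a` on `K = ∏_{n ∈ ℕ} ℤ/pℤ` attached to a finitely supported
`a : ℕ → ℤ/pℤ`:  `w_a(x) = exp(2πi·v(a,x)/p)` where `v(a,x) ∈ {0, …, p−1}` is the canonical
representative of `∑ n, a n * x n` in `ℤ/pℤ`. -/
noncomputable def vilenkinChar (p : ℕ) (a : ℕ →₀ ZMod p) (x : ℕ → ZMod p) : ℂ :=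
  Complex.exp (2 * Real.pi * Complex.I * ((a.sum fun n an => an * x n).val : ℂ) / p)

/-- Every continuous homomorphism `φ` from `K = ∏_{n ∈ ℕ} ℤ/pℤ` to the
circle group `{z ∈ ℂ : |z| = 1}` is a Vilenkin character: there is a unique finitely supported
`a : ℕ → ℤ/pℤ` with `φ = w_a`. -/
theorem continuous_char_eq_vilenkinChar
    {p : ℕ} (hp : p.Prime)
    (φ : (ℕ → ZMod p) → ℂ) (hφcont : Continuous φ)
    (hφhom : ∀ x y : ℕ → ZMod p, φ (x + y) = φ x * φ y)
    (hφabs : ∀ x : ℕ → ZMod p, ‖φ x‖ = 1) :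
    ∃! a : ℕ →₀ ZMod p, ∀ x : ℕ → ZMod p, φ x = vilenkinChar p a x := by
  classical
  haveI : NeZero p := ⟨hp.ne_zero⟩
  set ζ : ℂ := Complex.exp (2 * Real.pi * Complex.I / p) with hζdef
  have hζ : IsPrimitiveRoot ζ p := Complex.isPrimitiveRoot_exp p hp.ne_zero
  have hζp : ζ ^ p = 1 := hζ.pow_eq_one
  -- φ 0 = 1
  have hφ0 : φ 0 = 1 := by
    have hne : φ 0 ≠ 0 := by
      intro h0
      have := hφabs 0
      rw [h0, norm_zero] at this
      norm_num at this
    have h : φ 0 * φ 0 = φ 0 * 1 := by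
      rw [mul_one, ← hφhom 0 0, add_zero]
    exact mul_left_cancel₀ hne h
  -- φ of nsmul
  have hφ_nsmul : ∀ (n : ℕ) (x : ℕ → ZMod p), φ (n • x) = φ x ^ n := by
    intro n x
    induction n with
    | zero => simpa using hφ0
    | succ n ih => rw [succ_nsmul, hφhom, ih, pow_succ]
  -- all values are p-th roots of unity
  have hroot : ∀ x, φ x ^ p = 1 := by
    intro x
    have hz : p • x = 0 := by
      funext i
      show p • x i = 0
      rw [nsmul_eq_mul, ZMod.natCast_self, zero_mul]
    rw [← hφ_nsmul, hz, hφ0]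
  -- vilenkinChar as a power of ζ
  have hvc : ∀ (b : ℕ →₀ ZMod p) (x : ℕ → ZMod p),
      vilenkinChar p b x = ζ ^ (b.sum fun n bn => bn * x n).val := by
    intro b x
    rw [vilenkinChar, hζdef, ← Complex.exp_nat_mul]
    congr 1
    ring
  -- ζ powers depend only on the exponent mod p
  have hζmod : ∀ m n : ℕ, (m : ZMod p) = (n : ZMod p) → ζ ^ m = ζ ^ n := by
    intro m n h
    rw [pow_eq_pow_mod m hζp, pow_eq_pow_mod n hζp,
      (ZMod.natCast_eq_natCast_iff' m n p).mp h]
  -- triviality on a cylinder subgroup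
  obtain ⟨N, hNtriv⟩ : ∃ N, ∀ x : ℕ → ZMod p, (∀ i < N, x i = 0) → φ x = 1 := by
    have hTfin : ({z : ℂ | z ^ p = 1} \ {1}).Finite := by
      refine Set.Finite.subset ((Polynomial.nthRoots p (1 : ℂ)).toFinset.finite_toSet) ?_
      intro z hz
      rw [Finset.mem_coe, Multiset.mem_toFinset, Polynomial.mem_nthRoots hp.pos]
      exact hz.1
    have hU : IsOpen ({z : ℂ | z ^ p = 1} \ {1})ᶜ := hTfin.isClosed.isOpen_compl
    have h1U : (1 : ℂ) ∈ ({z : ℂ | z ^ p = 1} \ {1})ᶜ := fun h => h.2 rfl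
    have hmem : φ ⁻¹' ({z : ℂ | z ^ p = 1} \ {1})ᶜ ∈ nhds (0 : ℕ → ZMod p) := by
      have := hφcont.continuousAt (x := (0 : ℕ → ZMod p))
      apply this.preimage_mem_nhds
      rw [hφ0]
      exact hU.mem_nhds h1U
    rw [nhds_pi, Filter.mem_pi] at hmem
    obtain ⟨I, hIfin, V, hV, hsub⟩ := hmem
    obtain ⟨M, hM⟩ := hIfin.bddAbove
    refine ⟨M + 1, fun x hx => ?_⟩
    have hxU : φ x ∈ ({z : ℂ | z ^ p = 1} \ {1})ᶜ := by
      apply hsub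
      intro i hi
      have : x i = 0 := hx i (Nat.lt_succ_of_le (hM hi))
      rw [this]
      exact mem_of_mem_nhds (hV i)
    by_contra hne
    exact hxU ⟨hroot x, hne⟩
  -- choose exponents for the values of φ
  have hexists : ∀ x : ℕ → ZMod p, ∃ m, m < p ∧ ζ ^ m = φ x := by
    intro x
    obtain ⟨m, hm, h⟩ := hζ.eq_pow_of_pow_eq_one (hroot x)
    exact ⟨m, hm, h⟩
  choose k hk hkζ using hexists
  set c : ℕ → ZMod p := fun n => ((k (Pi.single n 1) : ℕ) : ZMod p) with hc
  set a : ℕ →₀ ZMod p := ∑ n ∈ Finset.range N, Finsupp.single n (c n) with ha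
  have haapp : ∀ n, a n = if n < N then c n else 0 := by
    intro n
    rw [ha, Finset.sum_apply']
    simp only [Finsupp.single_apply]
    rw [Finset.sum_ite_eq' (Finset.range N) n c]
    simp [Finset.mem_range]
  -- the Finsupp sum of a over any x
  have hasum : ∀ x : ℕ → ZMod p,
      (a.sum fun n an => an * x n) = ∑ n ∈ Finset.range N, c n * x n := by
    intro x
    rw [Finsupp.sum_of_support_subset a ?_ _ (fun i _ => by rw [zero_mul])]
    · refine Finset.sum_congr rfl fun n hn => ?_
      rw [haapp n, if_pos (Finset.mem_range.mp hn)]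
    · intro n hn
      rw [Finsupp.mem_support_iff] at hn
      rw [Finset.mem_range]
      by_contra h
      exact hn (by rw [haapp n, if_neg h])
  -- φ of a finite sum
  have hφsum : ∀ (s : Finset ℕ) (f : ℕ → (ℕ → ZMod p)),
      φ (∑ n ∈ s, f n) = ∏ n ∈ s, φ (f n) := by
    intro s f
    induction s using Finset.cons_induction with
    | empty => simpa using hφ0
    | cons n s hns ih => rw [Finset.sum_cons, Finset.prod_cons, hφhom, ih]
  -- Pi.single as a smul of the basic single
  have hsmul : ∀ (n : ℕ) (v : ZMod p),
      (Pi.single n v : ℕ → ZMod p) = v.val • (Pi.single n 1 : ℕ → ZMod p) := by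
    intro n v
    have hv : v.val • (1 : ZMod p) = v := by
      rw [nsmul_eq_mul, mul_one, ZMod.natCast_val, ZMod.cast_id]
    conv_lhs => rw [← hv]
    rw [Pi.single_smul]
  -- the main computation
  have hmain : ∀ x : ℕ → ZMod p, φ x = vilenkinChar p a x := by
    intro x
    have hx : x = (fun i => if i < N then x i else 0) + (fun i => if i < N then 0 else x i) := by
      funext i
      by_cases h : i < N <;> simp [h]
    have htail : φ (fun i => if i < N then 0 else x i) = 1 :=
      hNtriv _ (fun i hi => by simp [hi])
    have hhead : (fun i => if i < N then x i else 0) =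
        ∑ n ∈ Finset.range N, Pi.single n (x n) := by
      funext i
      rw [Finset.sum_apply]
      simp only [Pi.single_apply]
      rw [Finset.sum_ite_eq (Finset.range N) i x]
      simp [Finset.mem_range]
    have hφx : φ x = ζ ^ (∑ n ∈ Finset.range N, k (Pi.single n 1) * (x n).val) := by
      conv_lhs => rw [hx]
      rw [hφhom, htail, mul_one, hhead, hφsum]
      have : ∀ n ∈ Finset.range N,
          φ (Pi.single n (x n)) = (ζ ^ k (Pi.single n 1)) ^ (x n).val := by
        intro n _
        rw [hsmul n (x n), hφ_nsmul, hkζ]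
      rw [Finset.prod_congr rfl this]
      rw [← Finset.prod_pow_eq_pow_sum]
      refine Finset.prod_congr rfl fun n _ => ?_
      rw [pow_mul]
    rw [hφx, hvc]
    apply hζmod
    rw [hasum]
    simp only [Nat.cast_sum, Nat.cast_mul, ZMod.natCast_val, ZMod.cast_id, hc]
  -- evaluation of the Finsupp sum at a basic single
  have hsum_single : ∀ (b : ℕ →₀ ZMod p) (n : ℕ),
      (b.sum fun m bm => bm * (Pi.single n 1 : ℕ → ZMod p) m) = b n := by
    intro b n
    rw [Finsupp.sum_eq_single n]
    · simp
    · intro m _ hmn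
      rw [Pi.single_apply, if_neg hmn, mul_zero]
    · intro _
      rw [zero_mul]
  refine ⟨a, hmain, ?_⟩
  intro b hb
  ext n
  have h1 : vilenkinChar p b (Pi.single n 1) = vilenkinChar p a (Pi.single n 1) :=
    (hb (Pi.single n 1)).symm.trans (hmain (Pi.single n 1))
  rw [hvc, hvc, hsum_single, hsum_single] at h1
  exact ZMod.val_injective p (hζ.pow_inj (ZMod.val_lt (b n)) (ZMod.val_lt (a n)) h1)
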